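/- arXiv:2107.03612 — 4 statements merged into one kernel-verified Lean document; each statement's English description precedes it below -/
import Mathlib

section
/- Let k be an algebraically closed field with char k ∉ {2,3}, and let a, b, c ∈ k satisfy abc ≠ 0 and (3abc)³ ≠ (a³+b³+c³)³. In the Sklyanin algebra S(a,b,c), suppose r and s are elements of the k-linear span of the images of the generators x, y, z, suppose r and s are linearly independent, and suppose r·s = q·(s·r) for some nonzero q ∈ k. Then q = −1 and a = b. -/
noncomputable section

/-- The free algebra on three generators `x, y, z` (indexed by `Fin 3`). -/
abbrev F3 (k : Type) [Field k] : Type := FreeAlgebra k (Fin 3)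

noncomputable def X (k : Type) [Field k] : F3 k := FreeAlgebra.ι k 0
noncomputable def Y (k : Type) [Field k] : F3 k := FreeAlgebra.ι k 1
noncomputable def Z (k : Type) [Field k] : F3 k := FreeAlgebra.ι k 2

/-- The quotient of the free algebra on `x, y, z` by the two-sided ideal
generated by the set `rels`. -/
abbrev quotAlg (k : Type) [Field k] (rels : Set (F3 k)) : Type :=
  RingQuot (fun a b : F3 k => a ∈ rels ∧ b = 0)

/-- The image of the `i`-th generator in the quotient algebra. -/
noncomputable def gen (k : Type) [Field k] (rels : Set (F3 k)) (i : Fin 3) :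
    quotAlg k rels :=
  RingQuot.mkAlgHom k (fun a b : F3 k => a ∈ rels ∧ b = 0) (FreeAlgebra.ι k i)

/-- The `k`-linear span of the images of the generators in the quotient. -/
noncomputable def genSpan (k : Type) [Field k] (rels : Set (F3 k)) :
    Submodule k (quotAlg k rels) :=
  Submodule.span k (Set.range (gen k rels))

/-- There is a graded isomorphism between the two quotient algebras:
a `k`-algebra isomorphism carrying the span of the generators onto the
span of the generators. -/
def GradedIso (k : Type) [Field k] (r1 r2 : Set (F3 k)) : Prop :=
  ∃ φ : quotAlg k r1 ≃ₐ[k] quotAlg k r2,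
    Submodule.map φ.toLinearMap (genSpan k r1) = genSpan k r2

/-- Relations of the three-dimensional Sklyanin algebra `S(a,b,c)`:
`⟨a·yz + b·zy + c·x², a·zx + b·xz + c·y², a·xy + b·yx + c·z²⟩`. -/
noncomputable def Sklrel (k : Type) [Field k] (a b c : k) : Set (F3 k) :=
  {a • (Y k * Z k) + b • (Z k * Y k) + c • X k ^ 2,
   a • (Z k * X k) + b • (X k * Z k) + c • Y k ^ 2,
   a • (X k * Y k) + b • (Y k * X k) + c • Z k ^ 2}

/-!
Write `r = ∑ αᵢ xᵢ` and `s = ∑ βᵢ xᵢ`. The degree-two part of `S(a,b,c)` is `k³ ⊗ k³` modulo the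
span of the three relation tensors (seen by dualizing, through representations of the free algebra
that kill all words of length three), so `r s = q s r` says that `T = α ⊗ β - q β ⊗ α` equals
`p f₁ + u f₂ + v f₃`, with `(p, u, v) ≠ 0` because `α, β` are independent. On the diagonal this
forces `q ≠ 1`, and for `q = -1` the symmetry of `T` forces `a = b`. Otherwise
`T + q Tᵀ = (1 - q²) α ⊗ β` has rank one, and its `2 × 2` minors give `A³ = B³ = C³` for
`A = a + b q`, `B = b + a q`, `C = (1 + q) c`. Then the point
`(1 - q²) (a, b, c) = (A - q B, B - q A, (1 - q) C)` lies on one of the nine lines making up the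
cubic `(x³ + y³ + z³)³ = 27 (x y z)³`, which the hypothesis on `a, b, c` excludes.
-/

open Matrix

section QuadraticElement

variable {R ι : Type*} [CommRing R] [Fintype ι]

def quadraticElement (T : Matrix ι ι R) : FreeAlgebra R ι :=
  ∑ i, ∑ j, T i j • (FreeAlgebra.ι R i * FreeAlgebra.ι R j)

lemma quadraticElement_sub_smul (S T : Matrix ι ι R) (q : R) :
    quadraticElement (S - q • T) = quadraticElement S - q • quadraticElement T := by
  simp [quadraticElement, sub_smul, Finset.sum_sub_distrib, Finset.smul_sum, smul_smul]

lemma quadraticElement_vecMulVec (α β : ι → R) :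
    quadraticElement (vecMulVec α β) =
      (∑ i, α i • FreeAlgebra.ι R i) * ∑ j, β j • FreeAlgebra.ι R j := by
  simp [quadraticElement, vecMulVec_apply, Finset.sum_mul_sum, smul_smul, mul_comm]

variable [DecidableEq ι]

lemma Module.Dual.apply_eq_sum_mul (f : Module.Dual R (Matrix ι ι R)) (X : Matrix ι ι R) :
    f X = ∑ i, ∑ j, X i j * f (single i j 1) := by
  conv_lhs => rw [matrix_eq_sum_single X]
  simp only [map_sum]
  refine Finset.sum_congr rfl fun i _ => Finset.sum_congr rfl fun j _ => ?_
  rw [← smul_eq_mul, ← map_smul, smul_single, smul_eq_mul, mul_one]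

/-- Every word of length three acts by zero, so `FreeAlgebra.lift R (truncRep f)` evaluates `f` on
the degree-two component of an element. -/
def truncRep (f : Module.Dual R (Matrix ι ι R)) (i : ι) :
    Matrix (Option (Option ι)) (Option (Option ι)) R :=
  single none (some (some i)) 1 + ∑ l, f (single l i 1) • single (some (some l)) (some none) 1

lemma truncRep_mul_truncRep (f : Module.Dual R (Matrix ι ι R)) (i j : ι) :
    truncRep f i * truncRep f j = f (single i j 1) • single none (some none) 1 := by
  simp only [truncRep, add_mul, mul_add, Finset.sum_mul, Finset.mul_sum, mul_smul_comm,
    smul_mul_assoc, ne_eq, reduceCtorEq, not_false_eq_true, single_mul_single_of_ne, smul_zero,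
    Finset.sum_const_zero, add_zero, zero_add]
  rw [Finset.sum_eq_single i (fun l _ hl => by simp [Ne.symm hl]) (by simp)]
  simp

lemma lift_truncRep_quadraticElement (f : Module.Dual R (Matrix ι ι R)) (T : Matrix ι ι R) :
    FreeAlgebra.lift R (truncRep f) (quadraticElement T) = f T • single none (some none) 1 := by
  simp [quadraticElement, truncRep_mul_truncRep, Finset.sum_smul, f.apply_eq_sum_mul T]

end QuadraticElement

theorem mem_span_of_mkAlgHom_quadraticElement_eq_zero {k ι κ : Type*} [Field k] [Fintype ι]
    [DecidableEq ι] {rels : Set (FreeAlgebra k ι)} {R : κ → Matrix ι ι k}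
    (hrels : rels ⊆ Set.range (quadraticElement ∘ R)) {T : Matrix ι ι k}
    (hT : RingQuot.mkAlgHom k (fun x y => x ∈ rels ∧ y = 0) (quadraticElement T) = 0) :
    T ∈ Submodule.span k (Set.range R) := by
  by_contra hT'
  obtain ⟨f, hfT, hf⟩ := Submodule.exists_dual_map_eq_bot_of_notMem hT' inferInstance
  have hrels_ker : ∀ x ∈ rels, FreeAlgebra.lift k (truncRep f) x = 0 := by
    intro x hx
    obtain ⟨l, rfl⟩ := hrels hx
    have hl : R l ∈ Submodule.span k (Set.range R) := Submodule.subset_span ⟨l, rfl⟩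
    have hfl : f (R l) = 0 := by simpa [hf] using Submodule.mem_map_of_mem (f := f) hl
    simp [lift_truncRep_quadraticElement, hfl]
  have := congrArg (RingQuot.liftAlgHom k ⟨FreeAlgebra.lift k (truncRep f),
    fun x y ⟨hx, hy⟩ => by simp [hy, hrels_ker x hx]⟩) hT
  rw [RingQuot.liftAlgHom_mkAlgHom_apply, lift_truncRep_quadraticElement, map_zero] at this
  exact hfT (by simpa using congrFun₂ this none (some none))

section Independence

variable {k ι : Type*} [Field k] {α β : ι → k}

lemma LinearIndependent.of_sum_smul [Fintype ι] {M : Type*} [AddCommGroup M] [Module k M]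
    {v : ι → M} (h : LinearIndependent k ![∑ i, α i • v i, ∑ i, β i • v i]) :
    LinearIndependent k ![α, β] := by
  refine LinearIndependent.of_comp (Fintype.linearCombination k v) ?_
  convert h using 1
  ext i
  fin_cases i <;> simp [Fintype.linearCombination_apply]

lemma LinearIndependent.exists_mul_ne_mul (h : LinearIndependent k ![α, β]) :
    ∃ i j, α i * β j ≠ α j * β i := by
  by_contra! hprop
  obtain ⟨j, hj⟩ : ∃ j, β j ≠ 0 := by
    by_contra! hβ
    exact h.ne_zero 1 (funext hβ)
  refine hj (LinearIndependent.pair_iff.mp h (β j) (-α j) ?_).1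
  ext i
  simp only [Pi.add_apply, Pi.smul_apply, smul_eq_mul, Pi.zero_apply]
  linear_combination hprop i j

lemma LinearIndependent.exists_mul_sub_mul_ne_zero (h : LinearIndependent k ![α, β]) (q : k) :
    ∃ i j, α i * β j - q * (β i * α j) ≠ 0 := by
  obtain ⟨i₀, j₀, hne⟩ := h.exists_mul_ne_mul
  by_contra! hT
  by_cases hq : q = 1
  · subst hq
    exact hne (by linear_combination hT i₀ j₀)
  have hdiag (i : ι) : α i * β i = 0 :=
    (mul_eq_zero.mp (show (1 - q) * (α i * β i) = 0 by linear_combination hT i i)).resolve_left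
      (sub_ne_zero.mpr (Ne.symm hq))
  have hzero (i j : ι) : α i * β j = 0 :=
    pow_eq_zero_iff two_ne_zero |>.mp
      (by linear_combination (α i * β j) * hT i j + q * (α j * β j) * hdiag i)
  exact hne (by rw [hzero, hzero])

end Independence

lemma twistedTensor_minor_eq {R ι : Type*} [CommRing R] {α β : ι → R} {q : R}
    {M : Matrix ι ι R} (hT : ∀ i j, α i * β j - q * (β i * α j) = M i j) (i j i' j' : ι) :
    (M i j + q * M j i) * (M i' j' + q * M j' i') =
      (M i j' + q * M j' i) * (M i' j + q * M j i') := by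
  simp only [← hT]
  ring

section Hesse

variable {k : Type*} [Field k]

lemma sum_cubes_of_linear_form {α β γ x y z : k} (h : α * x + β * y + γ * z = 0)
    (hβ : β ^ 3 = α ^ 3) (hγ : γ ^ 3 = α ^ 3) :
    α ^ 3 * (x ^ 3 + y ^ 3 + z ^ 3) = 3 * (α * β * γ) * (x * y * z) := by
  linear_combination (α ^ 2 * x ^ 2 - α * x * (β * y + γ * z) + (β * y + γ * z) ^ 2
    - 3 * β * γ * y * z) * h - y ^ 3 * hβ - z ^ 3 * hγ

lemma hesse_of_linear_form {α β γ x y z : k} (hα : α ≠ 0) (h : α * x + β * y + γ * z = 0)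
    (hβ : β ^ 3 = α ^ 3) (hγ : γ ^ 3 = α ^ 3) :
    (x ^ 3 + y ^ 3 + z ^ 3) ^ 3 = 27 * (x * y * z) ^ 3 := by
  apply mul_left_cancel₀ (pow_ne_zero 9 hα)
  calc α ^ 9 * (x ^ 3 + y ^ 3 + z ^ 3) ^ 3 = (α ^ 3 * (x ^ 3 + y ^ 3 + z ^ 3)) ^ 3 := by ring
    _ = 27 * (α ^ 3 * β ^ 3 * γ ^ 3) * (x * y * z) ^ 3 := by
      rw [sum_cubes_of_linear_form h hβ hγ]; ring
    _ = α ^ 9 * (27 * (x * y * z) ^ 3) := by rw [hβ, hγ]; ring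

lemma hesse_of_cube_eq {A B C : k} (q : k) (hA : A ^ 3 = C ^ 3) (hB : B ^ 3 = C ^ 3) :
    ((A - q * B) ^ 3 + (B - q * A) ^ 3 + ((1 - q) * C) ^ 3) ^ 3 =
      27 * ((A - q * B) * (B - q * A) * ((1 - q) * C)) ^ 3 := by
  rcases eq_or_ne C 0 with rfl | hC
  · obtain rfl : A = 0 := pow_eq_zero_iff three_ne_zero |>.mp (by simpa using hA)
    obtain rfl : B = 0 := pow_eq_zero_iff three_ne_zero |>.mp (by simpa using hB)
    ring
  by_cases hAB : A = B
  · subst hAB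
    linear_combination (1 - q) ^ 9 * (8 * A ^ 6 - 7 * A ^ 3 * C ^ 3 - C ^ 6) * hA
  -- `A` and `B` are distinct cube roots of `C³`, so `-(A + B)` is the third one.
  have hsq : A ^ 2 + A * B + B ^ 2 = 0 :=
    mul_left_cancel₀ (sub_ne_zero.mpr hAB) (by linear_combination hA - hB)
  refine hesse_of_linear_form (β := C) (γ := -(A + B)) hC (by ring) rfl ?_
  linear_combination (-(A + 2 * B)) * hsq + hB

end Hesse

section TwistedTensor

variable {k : Type*} [Field k] {a b c q p u v : k} {α β : Fin 3 → k}

def sklyaninTensor (a b c p u v : k) : Matrix (Fin 3) (Fin 3) k :=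
  !![c * p, a * v, b * u; b * v, c * u, a * p; a * u, b * p, c * v]

lemma twistedTensor_coeffs_ne_zero (hαβ : LinearIndependent k ![α, β])
    (hT : ∀ i j, α i * β j - q * (β i * α j) = sklyaninTensor a b c p u v i j) :
    ¬(p = 0 ∧ u = 0 ∧ v = 0) := by
  rintro ⟨rfl, rfl, rfl⟩
  obtain ⟨i, j, h⟩ := hαβ.exists_mul_sub_mul_ne_zero q
  refine h ?_
  rw [hT]
  fin_cases i <;> fin_cases j <;> simp [sklyaninTensor]

lemma twistedTensor_q_ne_one (hc : c ≠ 0) (hαβ : LinearIndependent k ![α, β])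
    (hT : ∀ i j, α i * β j - q * (β i * α j) = sklyaninTensor a b c p u v i j) : q ≠ 1 := by
  rintro rfl
  have h00 := hT 0 0
  have h11 := hT 1 1
  have h22 := hT 2 2
  simp only [sklyaninTensor, of_apply, cons_val, cons_val_zero, cons_val_one] at h00 h11 h22
  refine twistedTensor_coeffs_ne_zero hαβ hT ⟨?_, ?_, ?_⟩
  · exact (mul_eq_zero.mp (by linear_combination -h00)).resolve_left hc
  · exact (mul_eq_zero.mp (by linear_combination -h11)).resolve_left hc
  · exact (mul_eq_zero.mp (by linear_combination -h22)).resolve_left hc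

lemma twistedTensor_eq_of_q_eq_neg_one (hαβ : LinearIndependent k ![α, β])
    (hT : ∀ i j, α i * β j - q * (β i * α j) = sklyaninTensor a b c p u v i j) (hq : q = -1) :
    a = b := by
  subst hq
  have h01 := hT 0 1
  have h10 := hT 1 0
  have h12 := hT 1 2
  have h21 := hT 2 1
  have h02 := hT 0 2
  have h20 := hT 2 0
  simp only [sklyaninTensor, of_apply, cons_val, cons_val_zero, cons_val_one]
    at h01 h10 h12 h21 h02 h20
  by_contra hab
  have hab' : a - b ≠ 0 := sub_ne_zero.mpr hab
  refine twistedTensor_coeffs_ne_zero hαβ hT ⟨?_, ?_, ?_⟩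
  · exact (mul_eq_zero.mp (by linear_combination h21 - h12)).resolve_left hab'
  · exact (mul_eq_zero.mp (by linear_combination h02 - h20)).resolve_left hab'
  · exact (mul_eq_zero.mp (by linear_combination h10 - h01)).resolve_left hab'

lemma twistedTensor_cube_relations (hαβ : LinearIndependent k ![α, β])
    (hT : ∀ i j, α i * β j - q * (β i * α j) = sklyaninTensor a b c p u v i j) :
    (b + a * q) * (((1 + q) * c) ^ 3 - (a + b * q) ^ 3) = 0 ∧
      (a + b * q) * (((1 + q) * c) ^ 3 - (b + a * q) ^ 3) = 0 := by
  have m := twistedTensor_minor_eq hT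
  have m1 := m 1 1 2 2
  have m2 := m 0 0 2 2
  have m3 := m 0 0 1 1
  have m4 := m 0 0 1 2
  have m5 := m 0 0 2 1
  have m6 := m 1 1 2 0
  have m7 := m 1 1 0 2
  have m8 := m 2 2 0 1
  have m9 := m 2 2 1 0
  simp only [sklyaninTensor, of_apply, cons_val, cons_val_zero, cons_val_one]
    at m1 m2 m3 m4 m5 m6 m7 m8 m9
  have eq_zero (x : k) (hp : x * p ^ 2 = 0) (hu : x * u ^ 2 = 0) (hv : x * v ^ 2 = 0) : x = 0 := by
    by_contra hx
    exact twistedTensor_coeffs_ne_zero hαβ hT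
      ⟨by simpa [hx] using hp, by simpa [hx] using hu, by simpa [hx] using hv⟩
  constructor
  · refine eq_zero _ ?_ ?_ ?_
    · linear_combination ((1 + q) * c) ^ 2 * m5 + (a + b * q) ^ 2 * m1
    · linear_combination ((1 + q) * c) ^ 2 * m7 + (a + b * q) ^ 2 * m2
    · linear_combination ((1 + q) * c) ^ 2 * m9 + (a + b * q) ^ 2 * m3
  · refine eq_zero _ ?_ ?_ ?_
    · linear_combination ((1 + q) * c) ^ 2 * m4 + (b + a * q) ^ 2 * m1
    · linear_combination ((1 + q) * c) ^ 2 * m6 + (b + a * q) ^ 2 * m2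
    · linear_combination ((1 + q) * c) ^ 2 * m8 + (b + a * q) ^ 2 * m3

lemma twistedTensor_cubes_eq (ha : a ≠ 0) (hc : c ≠ 0) (hq1 : q ≠ 1) (hq : q ≠ -1)
    (hαβ : LinearIndependent k ![α, β])
    (hT : ∀ i j, α i * β j - q * (β i * α j) = sklyaninTensor a b c p u v i j) :
    (a + b * q) ^ 3 = ((1 + q) * c) ^ 3 ∧ (b + a * q) ^ 3 = ((1 + q) * c) ^ 3 := by
  obtain ⟨hB, hA⟩ := twistedTensor_cube_relations hαβ hT
  have hC : (1 + q) * c ≠ 0 := mul_ne_zero (fun h => hq (by linear_combination h)) hc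
  have hq2 : 1 - q ^ 2 ≠ 0 := sub_ne_zero.mpr fun h => (sq_eq_one_iff.mp h.symm).elim hq1 hq
  have hAB : a + b * q ≠ 0 ∨ b + a * q ≠ 0 := by
    by_contra! h
    exact mul_ne_zero ha hq2 (by linear_combination h.1 - q * h.2)
  have hA0 : a + b * q ≠ 0 := fun h =>
    hAB.resolve_left (not_not.mpr h) (by simpa [h, hC] using hB)
  have hB0 : b + a * q ≠ 0 := fun h =>
    hAB.resolve_right (not_not.mpr h) (by simpa [h, hC] using hA)
  exact ⟨(sub_eq_zero.mp ((mul_eq_zero.mp hB).resolve_left hB0)).symm,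
    (sub_eq_zero.mp ((mul_eq_zero.mp hA).resolve_left hA0)).symm⟩

theorem q_eq_neg_one_and_eq_of_twistedTensor (habc : a * b * c ≠ 0)
    (hEC : (3 * (a * b * c)) ^ 3 ≠ (a ^ 3 + b ^ 3 + c ^ 3) ^ 3)
    (hαβ : LinearIndependent k ![α, β])
    (hT : ∀ i j, α i * β j - q * (β i * α j) = sklyaninTensor a b c p u v i j) :
    q = -1 ∧ a = b := by
  have ha : a ≠ 0 := left_ne_zero_of_mul (left_ne_zero_of_mul habc)
  have hc : c ≠ 0 := right_ne_zero_of_mul habc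
  have hq1 := twistedTensor_q_ne_one hc hαβ hT
  by_cases hq : q = -1
  · exact ⟨hq, twistedTensor_eq_of_q_eq_neg_one hαβ hT hq⟩
  obtain ⟨hA, hB⟩ := twistedTensor_cubes_eq ha hc hq1 hq hαβ hT
  have hq2 : 1 - q ^ 2 ≠ 0 := sub_ne_zero.mpr fun h => (sq_eq_one_iff.mp h.symm).elim hq1 hq
  have hesse := hesse_of_cube_eq q hA hB
  have hdeg : (1 - q ^ 2) ^ 9 * ((3 * (a * b * c)) ^ 3 - (a ^ 3 + b ^ 3 + c ^ 3) ^ 3) = 0 := by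
    linear_combination -hesse
  exact absurd (sub_eq_zero.mp ((mul_eq_zero.mp hdeg).resolve_left (pow_ne_zero 9 hq2))) hEC

end TwistedTensor

section Sklyanin

variable {k : Type} [Field k] {a b c : k}

def sklyaninRelMatrix (a b c : k) : Fin 3 → Matrix (Fin 3) (Fin 3) k :=
  ![sklyaninTensor a b c 1 0 0, sklyaninTensor a b c 0 1 0, sklyaninTensor a b c 0 0 1]

lemma sum_smul_sklyaninRelMatrix (w : Fin 3 → k) :
    ∑ l, w l • sklyaninRelMatrix a b c l = sklyaninTensor a b c (w 0) (w 1) (w 2) := by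
  ext i j
  fin_cases i <;> fin_cases j <;>
    simp [Fin.sum_univ_three, sklyaninRelMatrix, sklyaninTensor, mul_comm]

lemma Sklrel_subset_range_quadraticElement :
    Sklrel k a b c ⊆ Set.range (quadraticElement ∘ sklyaninRelMatrix a b c) := by
  rintro x (rfl | rfl | rfl) <;> [refine ⟨0, ?_⟩; refine ⟨1, ?_⟩; refine ⟨2, ?_⟩] <;>
    simp [quadraticElement, Fin.sum_univ_three, sklyaninRelMatrix, sklyaninTensor, X, Y, Z,
      pow_two] <;>
    abel

lemma twistedTensor_mem_span_sklyaninRelMatrix {q : k} {α β : Fin 3 → k}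
    (h : (∑ i, α i • gen k (Sklrel k a b c) i) * (∑ i, β i • gen k (Sklrel k a b c) i) =
      q • ((∑ i, β i • gen k (Sklrel k a b c) i) * (∑ i, α i • gen k (Sklrel k a b c) i))) :
    vecMulVec α β - q • vecMulVec β α ∈
      Submodule.span k (Set.range (sklyaninRelMatrix a b c)) := by
  refine mem_span_of_mkAlgHom_quadraticElement_eq_zero Sklrel_subset_range_quadraticElement ?_
  simp only [quadraticElement_sub_smul, quadraticElement_vecMulVec, map_sub, map_smul, map_mul,
    map_sum]
  simpa [gen, sub_eq_zero] using h

end Sklyanin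

theorem stmt14_general (k : Type) [Field k]
    (a b c : k) (habc : a * b * c ≠ 0)
    (hEC : (3 * (a * b * c)) ^ 3 ≠ (a ^ 3 + b ^ 3 + c ^ 3) ^ 3)
    (r s : quotAlg k (Sklrel k a b c))
    (hr : r ∈ genSpan k (Sklrel k a b c)) (hs : s ∈ genSpan k (Sklrel k a b c))
    (hind : LinearIndependent k ![r, s])
    (q : k) (hrs : r * s = q • (s * r)) :
    q = -1 ∧ a = b := by
  obtain ⟨α, rfl⟩ := (Submodule.mem_span_range_iff_exists_fun k).mp hr
  obtain ⟨β, rfl⟩ := (Submodule.mem_span_range_iff_exists_fun k).mp hs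
  obtain ⟨w, hw⟩ := (Submodule.mem_span_range_iff_exists_fun k).mp
    (twistedTensor_mem_span_sklyaninRelMatrix hrs)
  refine q_eq_neg_one_and_eq_of_twistedTensor (p := w 0) (u := w 1) (v := w 2) habc hEC
    hind.of_sum_smul fun i j => ?_
  rw [← sum_smul_sklyaninRelMatrix, hw]
  simp [vecMulVec]

theorem stmt14 (k : Type) [Field k] [IsAlgClosed k]
    (hchar2 : ringChar k ≠ 2) (hchar3 : ringChar k ≠ 3)
    (a b c : k) (habc : a * b * c ≠ 0)
    (hEC : (3 * (a * b * c)) ^ 3 ≠ (a ^ 3 + b ^ 3 + c ^ 3) ^ 3)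
    (r s : quotAlg k (Sklrel k a b c))
    (hr : r ∈ genSpan k (Sklrel k a b c)) (hs : s ∈ genSpan k (Sklrel k a b c))
    (hind : LinearIndependent k ![r, s])
    (q : k) (hq : q ≠ 0) (hrs : r * s = q • (s * r)) :
    q = -1 ∧ a = b :=
  stmt14_general k a b c habc hEC r s hr hs hind q hrs
end
end

section
/- Let k be an algebraically closed field with char k ∉ {2,3}, and let c ∈ k satisfy c ≠ 0 and (3c)³ ≠ (2+c³)³. Then in the Sklyanin algebra S(1,1,c) there exist elements r and s of the k-linear span of the images of the generators x, y, z such that r and s are linearly independent and r·s = −(s·r). -/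
noncomputable section

/-
Take `r = x + y - (2/c) z` and `s = x - y`. Expanding, `r s + s r` is `2/c` times the difference of
the first two defining relations, so it vanishes in `S(1,1,c)`. For linear independence: when
`a = b`, sending the generators to a basis of `k³` inside the exterior algebra `Λ(k³)` kills every
defining relation, since there `u v + v u = 0` and `u² = 0`. Hence `x, y, z` stay linearly
independent in `S(a,a,c)`, and the coefficient vectors `(1, 1, -2/c)` and `(1, -1, 0)` are
independent because `2 ≠ 0` in `k`.
-/

namespace Sklyanin

variable {k : Type} [Field k]

theorem mkAlgHom_eq_zero_of_mem {rels : Set (F3 k)} {f : F3 k} (hf : f ∈ rels) :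
    RingQuot.mkAlgHom k (fun a b : F3 k => a ∈ rels ∧ b = 0) f = 0 := by
  simpa using RingQuot.mkAlgHom_rel k (s := fun a b : F3 k => a ∈ rels ∧ b = 0) ⟨hf, rfl⟩

theorem gen_mem_genSpan (rels : Set (F3 k)) (i : Fin 3) : gen k rels i ∈ genSpan k rels :=
  Submodule.subset_span ⟨i, rfl⟩

section Relations

variable (a b c : k)

local notation "x" => gen k (Sklrel k a b c) 0
local notation "y" => gen k (Sklrel k a b c) 1
local notation "z" => gen k (Sklrel k a b c) 2

theorem rel_x : a • (y * z) + b • (z * y) + c • x ^ 2 = 0 := by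
  have h := mkAlgHom_eq_zero_of_mem (rels := Sklrel k a b c) (Or.inl rfl)
  simp only [map_add, map_smul, map_mul, map_pow] at h
  exact h

theorem rel_y : a • (z * x) + b • (x * z) + c • y ^ 2 = 0 := by
  have h := mkAlgHom_eq_zero_of_mem (rels := Sklrel k a b c) (Or.inr (Or.inl rfl))
  simp only [map_add, map_smul, map_mul, map_pow] at h
  exact h

end Relations

def toExterior (a c : k) : quotAlg k (Sklrel k a a c) →ₐ[k] ExteriorAlgebra k (Fin 3 → k) :=
  RingQuot.liftAlgHom k ⟨FreeAlgebra.lift k fun i => ExteriorAlgebra.ι k (Pi.single i 1), by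
    rintro f _ ⟨hf, rfl⟩
    have anticomm := ExteriorAlgebra.ι_add_mul_swap (R := k) (M := Fin 3 → k)
    rcases hf with rfl | rfl | rfl <;> simp [X, Y, Z, sq, ← smul_add, anticomm]⟩

theorem toExterior_gen (a c : k) (i : Fin 3) :
    toExterior a c (gen k (Sklrel k a a c) i) = ExteriorAlgebra.ι k (Pi.single i 1) := by
  simp [toExterior, gen]

theorem linearIndependent_gen (a c : k) : LinearIndependent k (gen k (Sklrel k a a c)) := by
  apply LinearIndependent.of_comp (toExterior a c).toLinearMap
  have hcomp : (toExterior a c).toLinearMap ∘ gen k (Sklrel k a a c) =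
      ExteriorAlgebra.ι k ∘ Pi.basisFun k (Fin 3) := by
    ext1 i
    simp [toExterior_gen]
  rw [hcomp]
  exact (Pi.basisFun k (Fin 3)).linearIndependent.map' _
    (LinearMap.ker_eq_bot.mpr fun _ _ => (ExteriorAlgebra.ι_inj k _ _).mp)

section AnticommutingPair

variable (c : k)

local notation "x" => gen k (Sklrel k 1 1 c) 0
local notation "y" => gen k (Sklrel k 1 1 c) 1
local notation "z" => gen k (Sklrel k 1 1 c) 2

theorem linearIndependent_pair (hchar2 : ringChar k ≠ 2) :
    LinearIndependent k ![x + y - (2 / c) • z, x - y] := by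
  rw [LinearIndependent.pair_iff]
  intro u v huv
  have hcoef := Fintype.linearIndependent_iff.mp (linearIndependent_gen 1 c)
    ![u + v, u - v, -(u * (2 / c))] (by
      rw [Fin.sum_univ_three, ← huv]
      simp only [Matrix.cons_val]
      module)
  have hsum : u + v = 0 := hcoef 0
  have hdiff : u - v = 0 := hcoef 1
  have hu : u = 0 := (mul_eq_zero.mp (by linear_combination hsum + hdiff : 2 * u = 0)).resolve_left
    (Ring.two_ne_zero hchar2)
  exact ⟨hu, by linear_combination hsum - hu⟩

variable {c} in
theorem pair_anticomm (hc : c ≠ 0) :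
    (x + y - (2 / c) • z) * (x - y) = -((x - y) * (x + y - (2 / c) • z)) := by
  have h2c : 2 / c * c = 2 := div_mul_cancel₀ 2 hc
  rw [← sub_eq_zero, sub_neg_eq_add]
  linear_combination (norm := skip)
    (2 / c) • rel_x 1 1 c - (2 / c) • rel_y 1 1 c - h2c • (x ^ 2 - y ^ 2)
  simp only [sq, smul_sub, sub_mul, mul_sub, add_mul, mul_add, smul_mul_assoc, mul_smul_comm]
  module

end AnticommutingPair

end Sklyanin

open Sklyanin in
theorem stmt15_general (k : Type) [Field k]
    (hchar2 : ringChar k ≠ 2)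
    (c : k) (hc : c ≠ 0) :
    ∃ r s : quotAlg k (Sklrel k 1 1 c),
      r ∈ genSpan k (Sklrel k 1 1 c) ∧ s ∈ genSpan k (Sklrel k 1 1 c) ∧
      LinearIndependent k ![r, s] ∧ r * s = -(s * r) := by
  have hgen := gen_mem_genSpan (Sklrel k 1 1 c)
  refine ⟨_, _, ?_, ?_, linearIndependent_pair c hchar2, pair_anticomm hc⟩
  · exact sub_mem (add_mem (hgen 0) (hgen 1)) (Submodule.smul_mem _ _ (hgen 2))
  · exact sub_mem (hgen 0) (hgen 1)

theorem stmt15 (k : Type) [Field k] [IsAlgClosed k]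
    (hchar2 : ringChar k ≠ 2) (hchar3 : ringChar k ≠ 3)
    (c : k) (hc : c ≠ 0) (hEC : (3 * c) ^ 3 ≠ (2 + c ^ 3) ^ 3) :
    ∃ r s : quotAlg k (Sklrel k 1 1 c),
      r ∈ genSpan k (Sklrel k 1 1 c) ∧ s ∈ genSpan k (Sklrel k 1 1 c) ∧
      LinearIndependent k ![r, s] ∧ r * s = -(s * r) :=
  stmt15_general k hchar2 c hc
end
end

section
/- Let k be an algebraically closed field with char k ∉ {2,3}, and let a, b, c ∈ k satisfy abc ≠ 0 and not a³ = b³ = c³. If r and s are elements of the k-linear span of the images of the generators x, y, z in the Sklyanin algebra S(a,b,c) satisfying r·s = s·r − s², then r and s are linearly dependent over k. -/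
noncomputable section

section Aux

variable {k : Type} [Field k]

/-- Relation matrices -/
def R1 (a b c : k) : Fin 3 → Fin 3 → k := fun i j =>
  if i = 0 ∧ j = 0 then c else if i = 1 ∧ j = 2 then a else if i = 2 ∧ j = 1 then b else 0
def R2 (a b c : k) : Fin 3 → Fin 3 → k := fun i j =>
  if i = 1 ∧ j = 1 then c else if i = 2 ∧ j = 0 then a else if i = 0 ∧ j = 2 then b else 0
def R3 (a b c : k) : Fin 3 → Fin 3 → k := fun i j =>
  if i = 2 ∧ j = 2 then c else if i = 0 ∧ j = 1 then a else if i = 1 ∧ j = 0 then b else 0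

def pr (a b c : k) (N : Fin 3 → Fin 3 → k) : Fin 3 → Fin 3 → k := fun i j =>
  c * N i j - N 0 0 * R1 a b c i j - N 1 1 * R2 a b c i j - N 2 2 * R3 a b c i j

@[ext] structure Tr (k : Type) [Field k] (a b c : k) : Type where
  c0 : k
  c1 : Fin 3 → k
  c2 : Fin 3 → Fin 3 → k

namespace Tr
variable {a b c : k}

instance : Zero (Tr k a b c) := ⟨⟨0, 0, 0⟩⟩
instance : One (Tr k a b c) := ⟨⟨1, 0, 0⟩⟩
instance : Add (Tr k a b c) := ⟨fun x y => ⟨x.c0 + y.c0, x.c1 + y.c1, x.c2 + y.c2⟩⟩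
instance : Neg (Tr k a b c) := ⟨fun x => ⟨-x.c0, -x.c1, -x.c2⟩⟩
instance : Mul (Tr k a b c) :=
  ⟨fun x y => ⟨x.c0 * y.c0, x.c0 • y.c1 + y.c0 • x.c1,
    x.c0 • y.c2 + y.c0 • x.c2 + pr a b c (fun i j => x.c1 i * y.c1 j)⟩⟩

@[simp] theorem zero_c0 : (0 : Tr k a b c).c0 = 0 := rfl
@[simp] theorem zero_c1 : (0 : Tr k a b c).c1 = 0 := rfl
@[simp] theorem zero_c2 : (0 : Tr k a b c).c2 = 0 := rfl
@[simp] theorem one_c0 : (1 : Tr k a b c).c0 = 1 := rfl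
@[simp] theorem one_c1 : (1 : Tr k a b c).c1 = 0 := rfl
@[simp] theorem one_c2 : (1 : Tr k a b c).c2 = 0 := rfl
@[simp] theorem add_c0 (x y : Tr k a b c) : (x + y).c0 = x.c0 + y.c0 := rfl
@[simp] theorem add_c1 (x y : Tr k a b c) : (x + y).c1 = x.c1 + y.c1 := rfl
@[simp] theorem add_c2 (x y : Tr k a b c) : (x + y).c2 = x.c2 + y.c2 := rfl
@[simp] theorem neg_c0 (x : Tr k a b c) : (-x).c0 = -x.c0 := rfl
@[simp] theorem neg_c1 (x : Tr k a b c) : (-x).c1 = -x.c1 := rfl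
@[simp] theorem neg_c2 (x : Tr k a b c) : (-x).c2 = -x.c2 := rfl
@[simp] theorem mul_c0 (x y : Tr k a b c) : (x * y).c0 = x.c0 * y.c0 := rfl
@[simp] theorem mul_c1 (x y : Tr k a b c) : (x * y).c1 = x.c0 • y.c1 + y.c0 • x.c1 := rfl
@[simp] theorem mul_c2 (x y : Tr k a b c) :
    (x * y).c2 = x.c0 • y.c2 + y.c0 • x.c2 + pr a b c (fun i j => x.c1 i * y.c1 j) := rfl

instance : AddCommGroup (Tr k a b c) where
  add_assoc x y z := by
    ext <;> simp <;> ring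
  zero_add x := by ext <;> simp
  add_zero x := by ext <;> simp
  add_comm x y := by ext <;> simp <;> ring
  neg_add_cancel x := by ext <;> simp
  nsmul := nsmulRec
  zsmul := zsmulRec

instance : Ring (Tr k a b c) where
  __ := (inferInstance : AddCommGroup (Tr k a b c))
  left_distrib x y z := by
    ext i j <;> simp [pr, Pi.add_apply, smul_add, Pi.smul_apply, smul_eq_mul] <;> ring
  right_distrib x y z := by
    ext i j <;> simp [pr, Pi.add_apply, smul_add, Pi.smul_apply, smul_eq_mul] <;> ring
  zero_mul x := by ext i j <;> simp [pr]
  mul_zero x := by ext i j <;> simp [pr]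
  mul_assoc x y z := by
    ext i j <;> simp [pr, Pi.add_apply, Pi.smul_apply, smul_eq_mul] <;> ring
  one_mul x := by ext i j <;> simp [pr]
  mul_one x := by ext i j <;> simp [pr]

@[simp] theorem sub_c0' (x y : Tr k a b c) : (x - y).c0 = x.c0 - y.c0 := by
  rw [sub_eq_add_neg (x.c0)]; rfl
@[simp] theorem sub_c1' (x y : Tr k a b c) : (x - y).c1 = x.c1 - y.c1 := by
  rw [sub_eq_add_neg (x.c1)]; rfl
@[simp] theorem sub_c2' (x y : Tr k a b c) : (x - y).c2 = x.c2 - y.c2 := by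
  rw [sub_eq_add_neg (x.c2)]; rfl

end Tr

namespace Tr
variable {a b c : k}

def ofK : k →+* Tr k a b c where
  toFun t := ⟨t, 0, 0⟩
  map_one' := rfl
  map_mul' x y := by ext i j <;> simp [pr]
  map_zero' := rfl
  map_add' x y := by ext <;> simp

instance : Algebra k (Tr k a b c) :=
  (ofK).toAlgebra' (fun t x => by ext i j <;> simp [ofK, pr] <;> ring)

@[simp] theorem smul_c0 (t : k) (x : Tr k a b c) : (t • x).c0 = t * x.c0 := by
  rw [Algebra.smul_def]; rfl
@[simp] theorem smul_c1 (t : k) (x : Tr k a b c) : (t • x).c1 = t • x.c1 := by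
  rw [Algebra.smul_def]
  show ((ofK t : Tr k a b c) * x).c1 = _
  ext j
  simp [ofK, pr]

@[simp] theorem smul_c2 (t : k) (x : Tr k a b c) : (t • x).c2 = t • x.c2 := by
  rw [Algebra.smul_def]
  show ((ofK t : Tr k a b c) * x).c2 = _
  ext i j
  simp [ofK, pr]

end Tr

/-- generator images -/
def e (i : Fin 3) : Fin 3 → k := fun j => if j = i then 1 else 0

def gTr (a b c : k) (i : Fin 3) : Tr k a b c := ⟨0, e i, 0⟩

theorem gTr_mul (a b c : k) (i j : Fin 3) :
    gTr a b c i * gTr a b c j = (⟨0, 0, pr a b c (fun p q => e i p * e j q)⟩ : Tr k a b c) := by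
  ext p q <;> simp [gTr]


section Hom
variable (a b c : k)

def fTr : F3 k →ₐ[k] Tr k a b c := FreeAlgebra.lift k (gTr a b c)

theorem fTr_rel : ∀ ⦃x y : F3 k⦄, (x ∈ Sklrel k a b c ∧ y = 0) → fTr a b c x = fTr a b c y := by
  rintro x y ⟨hx, rfl⟩
  rw [map_zero]
  have h01 := gTr_mul (k := k) a b c 0 1
  rcases hx with rfl | rfl | rfl <;>
  · simp only [X, Y, Z, map_add, map_smul, map_mul, pow_two, fTr, FreeAlgebra.lift_ι_apply,
      gTr_mul]
    ext p q <;>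
      simp only [Tr.add_c0, Tr.add_c1, Tr.add_c2, Tr.smul_c0, Tr.smul_c1, Tr.smul_c2,
        Tr.zero_c0, Tr.zero_c1, Tr.zero_c2, Pi.add_apply, Pi.smul_apply, Pi.zero_apply,
        smul_eq_mul, mul_zero, add_zero, zero_add]
    fin_cases p <;> fin_cases q <;> simp [pr, R1, R2, R3, e] <;> ring
end Hom

theorem sum_gTr (a b c : k) (γ : Fin 3 → k) :
    ∑ i, γ i • gTr a b c i = (⟨0, γ, 0⟩ : Tr k a b c) := by
  rw [Fin.sum_univ_three]
  ext p q
  · simp [gTr]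
  · simp only [Tr.add_c1, Tr.smul_c1, Pi.add_apply, Pi.smul_apply, smul_eq_mul, gTr]
    fin_cases p <;> simp [e]
  · simp [gTr]

theorem key_eqs (a b c : k) (A B : Fin 3 → k)
    (h : pr a b c (fun i j => A i * B j) =
      pr a b c (fun i j => B i * A j) - pr a b c (fun i j => B i * B j)) :
    c * (A 1 * B 2 - B 1 * A 2 + B 1 * B 2) = a * B 0 ^ 2 ∧
    c * (A 2 * B 1 - B 2 * A 1 + B 2 * B 1) = b * B 0 ^ 2 ∧
    c * (A 2 * B 0 - B 2 * A 0 + B 2 * B 0) = a * B 1 ^ 2 ∧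
    c * (A 0 * B 2 - B 0 * A 2 + B 0 * B 2) = b * B 1 ^ 2 ∧
    c * (A 0 * B 1 - B 0 * A 1 + B 0 * B 1) = a * B 2 ^ 2 ∧
    c * (A 1 * B 0 - B 1 * A 0 + B 1 * B 0) = b * B 2 ^ 2 := by
  refine ⟨?_, ?_, ?_, ?_, ?_, ?_⟩
  · have := congrFun (congrFun h 1) 2; simp [pr, R1, R2, R3] at this; linear_combination this
  · have := congrFun (congrFun h 2) 1; simp [pr, R1, R2, R3] at this; linear_combination this
  · have := congrFun (congrFun h 2) 0; simp [pr, R1, R2, R3] at this; linear_combination this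
  · have := congrFun (congrFun h 0) 2; simp [pr, R1, R2, R3] at this; linear_combination this
  · have := congrFun (congrFun h 0) 1; simp [pr, R1, R2, R3] at this; linear_combination this
  · have := congrFun (congrFun h 1) 0; simp [pr, R1, R2, R3] at this; linear_combination this

theorem deg1_mul (a b c : k) (p q : Fin 3 → k) :
    (⟨0, p, 0⟩ : Tr k a b c) * ⟨0, q, 0⟩ = ⟨0, 0, pr a b c (fun i j => p i * q j)⟩ := by
  ext i j <;> simp

theorem scalar_dep (a b c : k) (h2 : (2:k) ≠ 0) (h3 : (3:k) ≠ 0) (hc : c ≠ 0)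
    (A B : Fin 3 → k)
    (E12 : c * (A 1 * B 2 - B 1 * A 2 + B 1 * B 2) = a * B 0 ^ 2)
    (E21 : c * (A 2 * B 1 - B 2 * A 1 + B 2 * B 1) = b * B 0 ^ 2)
    (E20 : c * (A 2 * B 0 - B 2 * A 0 + B 2 * B 0) = a * B 1 ^ 2)
    (E02 : c * (A 0 * B 2 - B 0 * A 2 + B 0 * B 2) = b * B 1 ^ 2)
    (E01 : c * (A 0 * B 1 - B 0 * A 1 + B 0 * B 1) = a * B 2 ^ 2)
    (E10 : c * (A 1 * B 0 - B 1 * A 0 + B 1 * B 0) = b * B 2 ^ 2) :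
    ∃ p q : k, (p ≠ 0 ∨ q ≠ 0) ∧ ∀ i, p * A i + q * B i = 0 := by
  have h2c : (2:k) * c ≠ 0 := mul_ne_zero h2 hc
  have S0 : 2 * c * (B 1 * B 2) = (a + b) * B 0 ^ 2 := by linear_combination E12 + E21
  have S1 : 2 * c * (B 2 * B 0) = (a + b) * B 1 ^ 2 := by linear_combination E20 + E02
  have S2 : 2 * c * (B 0 * B 1) = (a + b) * B 2 ^ 2 := by linear_combination E01 + E10
  have W0 : 2 * c * (A 1 * B 2 - A 2 * B 1) = (a - b) * B 0 ^ 2 := by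
    linear_combination E12 - E21
  have W1 : 2 * c * (A 2 * B 0 - A 0 * B 2) = (a - b) * B 1 ^ 2 := by
    linear_combination E20 - E02
  have W2 : 2 * c * (A 0 * B 1 - A 1 * B 0) = (a - b) * B 2 ^ 2 := by
    linear_combination E01 - E10
  have hcube : (a - b) * (B 0 ^ 3 + B 1 ^ 3 + B 2 ^ 3) = 0 := by
    linear_combination (-(B 0)) * W0 - B 1 * W1 - B 2 * W2
  have hBzero : (B 0 = 0 ∧ B 1 = 0 ∧ B 2 = 0) →
      ∃ p q : k, (p ≠ 0 ∨ q ≠ 0) ∧ ∀ i, p * A i + q * B i = 0 := by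
    rintro ⟨h0, h1, h22⟩
    refine ⟨0, 1, Or.inr one_ne_zero, fun i => ?_⟩
    fin_cases i <;> simp [h0, h1, h22]
  by_cases hab : a = b
  · subst hab
    have w0 : A 1 * B 2 - A 2 * B 1 = 0 :=
      (mul_eq_zero.mp (by linear_combination W0 :
        (2*c) * (A 1 * B 2 - A 2 * B 1) = 0)).resolve_left h2c
    have w1 : A 2 * B 0 - A 0 * B 2 = 0 :=
      (mul_eq_zero.mp (by linear_combination W1 :
        (2*c) * (A 2 * B 0 - A 0 * B 2) = 0)).resolve_left h2c
    have w2 : A 0 * B 1 - A 1 * B 0 = 0 :=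
      (mul_eq_zero.mp (by linear_combination W2 :
        (2*c) * (A 0 * B 1 - A 1 * B 0) = 0)).resolve_left h2c
    by_cases hB0 : B 0 = 0
    · by_cases hB1 : B 1 = 0
      · by_cases hB2 : B 2 = 0
        · exact hBzero ⟨hB0, hB1, hB2⟩
        · refine ⟨B 2, -A 2, Or.inl hB2, fun i => ?_⟩
          fin_cases i
          · show B 2 * A 0 + -A 2 * B 0 = 0; linear_combination -w1
          · show B 2 * A 1 + -A 2 * B 1 = 0; linear_combination w0
          · show B 2 * A 2 + -A 2 * B 2 = 0; ring
      · refine ⟨B 1, -A 1, Or.inl hB1, fun i => ?_⟩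
        fin_cases i
        · show B 1 * A 0 + -A 1 * B 0 = 0; linear_combination w2
        · show B 1 * A 1 + -A 1 * B 1 = 0; ring
        · show B 1 * A 2 + -A 1 * B 2 = 0; linear_combination -w0
    · refine ⟨B 0, -A 0, Or.inl hB0, fun i => ?_⟩
      fin_cases i
      · show B 0 * A 0 + -A 0 * B 0 = 0; ring
      · show B 0 * A 1 + -A 0 * B 1 = 0; linear_combination -w2
      · show B 0 * A 2 + -A 0 * B 2 = 0; linear_combination w1
  · have hab' : a - b ≠ 0 := sub_ne_zero.mpr hab
    have hsum : B 0 ^ 3 + B 1 ^ 3 + B 2 ^ 3 = 0 :=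
      (mul_eq_zero.mp hcube).resolve_left hab'
    by_cases hB0 : B 0 = 0
    · have h12 : B 1 * B 2 = 0 :=
        (mul_eq_zero.mp (by linear_combination S0 + ((a+b) * B 0) * hB0 :
          (2*c) * (B 1 * B 2) = 0)).resolve_left h2c
      rcases mul_eq_zero.mp h12 with h1 | h22
      · have h2' : B 2 = 0 := by
          have : B 2 ^ 3 = 0 := by linear_combination hsum - (B 0 ^2)*hB0 - (B 1^2)*h1
          exact pow_eq_zero_iff (by norm_num) |>.mp this
        exact hBzero ⟨hB0, h1, h2'⟩
      · have h1' : B 1 = 0 := by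
          have : B 1 ^ 3 = 0 := by linear_combination hsum - (B 0 ^2)*hB0 - (B 2^2)*h22
          exact pow_eq_zero_iff (by norm_num) |>.mp this
        exact hBzero ⟨hB0, h1', h22⟩
    · by_cases hB1 : B 1 = 0
      · have h20 : B 2 * B 0 = 0 :=
          (mul_eq_zero.mp (by linear_combination S1 + ((a+b) * B 1) * hB1 :
            (2*c) * (B 2 * B 0) = 0)).resolve_left h2c
        have hB2 : B 2 = 0 := (mul_eq_zero.mp h20).resolve_right hB0
        exact absurd (pow_eq_zero_iff (n := 3) (by norm_num) |>.mp
          (by linear_combination hsum - (B 1 ^2)*hB1 - (B 2^2)*hB2)) hB0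
      · by_cases hB2 : B 2 = 0
        · have h01 : B 0 * B 1 = 0 :=
            (mul_eq_zero.mp (by linear_combination S2 + ((a+b) * B 2) * hB2 :
              (2*c) * (B 0 * B 1) = 0)).resolve_left h2c
          exact absurd h01 (mul_ne_zero hB0 hB1)
        · have h6 : (6:k) * c ≠ 0 := by
            have : (6:k) = 2 * 3 := by norm_num
            rw [this]
            exact mul_ne_zero (mul_ne_zero h2 h3) hc
          have hprod : (6 * c) * (B 0 * B 1 * B 2) = 0 := by
            linear_combination B 0 * S0 + B 1 * S1 + B 2 * S2 + (a+b) * hsum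
          rcases mul_eq_zero.mp hprod with h | h
          · exact absurd h h6
          · exact absurd h (mul_ne_zero (mul_ne_zero hB0 hB1) hB2)

theorem char_prime_ne (n : ℕ) (hn : n.Prime) (h : ringChar k ≠ n) : (n : k) ≠ 0 := by
  intro h0
  have hdvd : ringChar k ∣ n := (ringChar.spec k n).mp h0
  rcases CharP.char_is_prime_or_zero k (ringChar k) with hp | hz
  · exact h ((Nat.prime_dvd_prime_iff_eq hp hn).mp hdvd)
  · rw [hz] at hdvd
    exact hn.ne_zero (Nat.eq_zero_of_zero_dvd hdvd)


end Aux

theorem stmt16 (k : Type) [Field k] [IsAlgClosed k]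
    (hchar2 : ringChar k ≠ 2) (hchar3 : ringChar k ≠ 3)
    (a b c : k) (habc : a * b * c ≠ 0)
    (hD : ¬ (a ^ 3 = b ^ 3 ∧ b ^ 3 = c ^ 3))
    (r s : quotAlg k (Sklrel k a b c))
    (hr : r ∈ genSpan k (Sklrel k a b c)) (hs : s ∈ genSpan k (Sklrel k a b c))
    (hrs : r * s = s * r - s ^ 2) :
    ¬ LinearIndependent k ![r, s] := by
  intro hli
  have hc : c ≠ 0 := fun h => habc (by rw [h, mul_zero])
  have h2 : (2:k) ≠ 0 := char_prime_ne 2 Nat.prime_two hchar2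
  have h3 : (3:k) ≠ 0 := char_prime_ne 3 Nat.prime_three hchar3
  obtain ⟨A, hA⟩ := (Submodule.mem_span_range_iff_exists_fun k).mp hr
  obtain ⟨B, hB⟩ := (Submodule.mem_span_range_iff_exists_fun k).mp hs
  -- the algebra map to the truncated algebra
  set rel := fun x y : F3 k => x ∈ Sklrel k a b c ∧ y = 0 with hrel
  let φ : quotAlg k (Sklrel k a b c) →ₐ[k] Tr k a b c :=
    RingQuot.liftAlgHom k ⟨fTr a b c, fTr_rel a b c⟩
  have hφgen : ∀ i, φ (gen k (Sklrel k a b c) i) = gTr a b c i := fun i => by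
    show φ (RingQuot.mkAlgHom k rel (FreeAlgebra.ι k i)) = _
    rw [RingQuot.liftAlgHom_mkAlgHom_apply]
    exact FreeAlgebra.lift_ι_apply _ _
  have hφr : φ r = ⟨0, A, 0⟩ := by
    rw [← hA, map_sum]
    simp_rw [map_smul, hφgen]
    exact sum_gTr a b c A
  have hφs : φ s = ⟨0, B, 0⟩ := by
    rw [← hB, map_sum]
    simp_rw [map_smul, hφgen]
    exact sum_gTr a b c B
  have hkey : pr a b c (fun i j => A i * B j) =
      pr a b c (fun i j => B i * A j) - pr a b c (fun i j => B i * B j) := by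
    have := congrArg φ hrs
    rw [map_mul, map_sub, map_mul, map_pow, hφr, hφs, pow_two, deg1_mul, deg1_mul,
      deg1_mul] at this
    have h2' := congrArg Tr.c2 this
    simpa using h2'
  obtain ⟨E12, E21, E20, E02, E01, E10⟩ := key_eqs a b c A B hkey
  obtain ⟨p, q, hpq, hcomb⟩ := scalar_dep a b c h2 h3 hc A B E12 E21 E20 E02 E01 E10
  have hzero : p • r + q • s = 0 := by
    rw [← hA, ← hB, Finset.smul_sum, Finset.smul_sum, ← Finset.sum_add_distrib]
    have : ∀ i ∈ Finset.univ, p • A i • gen k (Sklrel k a b c) i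
        + q • B i • gen k (Sklrel k a b c) i = 0 := by
      intro i _
      rw [smul_smul, smul_smul, ← add_smul, hcomb i, zero_smul]
    rw [Finset.sum_congr rfl this, Finset.sum_const_zero]
  obtain ⟨hp0, hq0⟩ := LinearIndependent.pair_iff.mp hli p q hzero
  rcases hpq with h | h
  · exact h hp0
  · exact h hq0
end
end

section
/- Let k be an algebraically closed field with char k ≠ 2, and let a ∈ k with a ≠ 1. In the algebra P(a), the elements r², s², and t² (squares of the images of the generators) are central, and the family of monomials { rⁱ sʲ tᵏ : i, j, k ∈ ℕ } is a basis of P(a) as a k-vector space (so the multiplication map from k₋₁[r,s] ⊗ k[t] to P(a) is a linear isomorphism, i.e., P(a) is a graded twisted tensor product of k₋₁[r,s] and k[t]). -/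
/-!
The three defining relations of `P(a)` read the same backwards, so a triple of operators
satisfying them defines a right action of `P(a)`. On the space with basis `e (i, j, K)` let
`r`, `s`, `t` act by the formulas for `r^i s^j t^K * x` (`x = r, s, t`) rewritten in ordered
monomials; since `t²` is central these formulas only depend on the parity of `K`, and the
relations can be checked on the basis. The map `e (i, j, K) ↦ r^i s^j t^K` intertwines this
action with right multiplication in `P(a)`, so `x ↦ e (0, 0, 0) · x` is its inverse and the
ordered monomials form a basis.

Centrality comes from `⁅x², y⁆ = ⁅x, xy + yx⁆` and `⁅x, y²⁆ = ⁅xy + yx, y⁆`: the relations turn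
these into `⁅t², r⁆ = a • ⁅t², r⁆` and `⁅t², s⁆ = 2 • ⁅t², s⁆`, forcing both to vanish.
-/

noncomputable section

/-- Relations of `P(a) = k⟨r,s,t⟩/⟨rs + sr, tr + rt − t² − a·r², t(r−s) + (r−s)t + 2s²⟩`,
with the generators `r, s, t` realized as the generators `X, Y, Z` of the free algebra. -/
noncomputable def Prel (k : Type) [Field k] (a : k) : Set (F3 k) :=
  {X k * Y k + Y k * X k,
   Z k * X k + X k * Z k - Z k ^ 2 - a • X k ^ 2,
   Z k * (X k - Y k) + (X k - Y k) * Z k + 2 * Y k ^ 2}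


section Commutators

attribute [local instance] LieRing.ofAssociativeRing

variable {A : Type*} [Ring A]

theorem lie_anticomm_left (x y : A) : ⁅x, x * y + y * x⁆ = ⁅x ^ 2, y⁆ := by
  simp only [Ring.lie_def, sq]; noncomm_ring

theorem lie_anticomm_right (x y : A) : ⁅x * y + y * x, y⁆ = ⁅x, y ^ 2⁆ := by
  simp only [Ring.lie_def, sq]; noncomm_ring

theorem lie_sq_self (x : A) : ⁅x ^ 2, x⁆ = 0 :=
  commute_iff_lie_eq.mp ((Commute.refl x).pow_left 2)

theorem lie_self_sq (x : A) : ⁅x, x ^ 2⁆ = 0 :=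
  commute_iff_lie_eq.mp ((Commute.refl x).pow_right 2)

end Commutators

theorem neg_one_pow_smul_neg_one_pow_smul {R M : Type*} [Ring R] [AddCommGroup M] [Module R M]
    (n : ℕ) (x : M) : (-1 : R) ^ n • (-1 : R) ^ n • x = x := by
  rw [smul_smul, pow_mul_pow_eq_one n (by rw [neg_one_mul, neg_neg]), one_smul]

structure IsPTriple {k A : Type*} [CommRing k] [Ring A] [Algebra k A] (a : k) (r s t : A) :
    Prop where
  anticomm_rs : r * s + s * r = 0
  anticomm_tr : t * r + r * t = t ^ 2 + a • r ^ 2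
  anticomm_ts : t * s + s * t = t ^ 2 + a • r ^ 2 + 2 * s ^ 2

section PTriple

variable {k A : Type*} [Field k] [Ring A] [Algebra k A] {a : k} {r s t : A}

theorem isPTriple_iff : IsPTriple a r s t ↔ r * s + s * r = 0 ∧
    t * r + r * t - t ^ 2 - a • r ^ 2 = 0 ∧ t * (r - s) + (r - s) * t + 2 * s ^ 2 = 0 := by
  have hts : t * (r - s) + (r - s) * t + 2 * s ^ 2
      = (t * r + r * t) - (t * s + s * t) + 2 * s ^ 2 := by
    simp only [mul_sub, sub_mul]; abel
  rw [hts, sub_sub, sub_eq_zero]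
  constructor
  · rintro ⟨hrs, htr, hts⟩
    exact ⟨hrs, htr, by rw [htr, hts]; abel⟩
  · rintro ⟨hrs, htr, hts⟩
    refine ⟨hrs, htr, ?_⟩
    rw [eq_comm, ← sub_eq_zero, ← hts, htr]
    abel

namespace IsPTriple

attribute [local instance] LieRing.ofAssociativeRing

theorem op (h : IsPTriple a r s t) :
    IsPTriple a (MulOpposite.op r) (MulOpposite.op s) (MulOpposite.op t) where
  anticomm_rs := by
    rw [← MulOpposite.op_mul, ← MulOpposite.op_mul, ← MulOpposite.op_add, add_comm,
      h.anticomm_rs, MulOpposite.op_zero]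
  anticomm_tr := by
    simp only [← MulOpposite.op_mul, ← MulOpposite.op_add, add_comm (r * t), h.anticomm_tr,
      ← MulOpposite.op_pow, ← MulOpposite.op_smul]
  anticomm_ts := by
    simp only [← MulOpposite.op_mul, ← MulOpposite.op_add, add_comm (s * t), h.anticomm_ts,
      ← MulOpposite.op_pow, ← MulOpposite.op_smul, two_mul]

theorem commute_r_sq_s (h : IsPTriple a r s t) : Commute (r ^ 2) s := by
  rw [commute_iff_lie_eq, ← lie_anticomm_left, h.anticomm_rs, lie_zero]

theorem commute_s_sq_r (h : IsPTriple a r s t) : Commute (s ^ 2) r := by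
  rw [Commute.symm_iff, commute_iff_lie_eq, ← lie_anticomm_right, h.anticomm_rs, zero_lie]

theorem lie_t_r_sq (h : IsPTriple a r s t) : ⁅t, r ^ 2⁆ = ⁅t ^ 2, r⁆ := by
  rw [← lie_anticomm_right, h.anticomm_tr, add_lie, smul_lie a, lie_sq_self, smul_zero,
    add_zero]

theorem commute_t_sq_r (h : IsPTriple a r s t) (ha : a ≠ 1) : Commute (t ^ 2) r := by
  have hlie : ⁅t ^ 2, r⁆ = a • ⁅t ^ 2, r⁆ := calc
    ⁅t ^ 2, r⁆ = ⁅t, t * r + r * t⁆ := (lie_anticomm_left t r).symm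
    _ = a • ⁅t, r ^ 2⁆ := by rw [h.anticomm_tr, lie_add, lie_self_sq, zero_add, lie_smul a]
    _ = a • ⁅t ^ 2, r⁆ := by rw [h.lie_t_r_sq]
  have : (1 - a) • ⁅t ^ 2, r⁆ = 0 := by rw [sub_smul, one_smul, ← hlie, sub_self]
  exact commute_iff_lie_eq.mpr <|
    (smul_eq_zero.mp this).resolve_left (sub_ne_zero.mpr ha.symm)

theorem commute_r_sq_t (h : IsPTriple a r s t) (ha : a ≠ 1) : Commute (r ^ 2) t := by
  rw [Commute.symm_iff, commute_iff_lie_eq, h.lie_t_r_sq, ← commute_iff_lie_eq]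
  exact h.commute_t_sq_r ha

theorem lie_t_s_sq (h : IsPTriple a r s t) : ⁅t, s ^ 2⁆ = ⁅t ^ 2, s⁆ := by
  rw [← lie_anticomm_right, h.anticomm_ts, two_mul, add_lie, add_lie, add_lie, smul_lie a,
    commute_iff_lie_eq.mp h.commute_r_sq_s, lie_sq_self, smul_zero]
  abel

theorem commute_t_sq_s (h : IsPTriple a r s t) (ha : a ≠ 1) : Commute (t ^ 2) s := by
  have hlie : ⁅t ^ 2, s⁆ = ⁅t ^ 2, s⁆ + ⁅t ^ 2, s⁆ := calc
    ⁅t ^ 2, s⁆ = ⁅t, t * s + s * t⁆ := (lie_anticomm_left t s).symm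
    _ = a • ⁅t, r ^ 2⁆ + (⁅t, s ^ 2⁆ + ⁅t, s ^ 2⁆) := by
      rw [h.anticomm_ts, two_mul, lie_add, lie_add, lie_self_sq, zero_add, lie_smul a, lie_add]
    _ = ⁅t ^ 2, s⁆ + ⁅t ^ 2, s⁆ := by
      rw [h.lie_t_r_sq, commute_iff_lie_eq.mp (h.commute_t_sq_r ha), smul_zero, zero_add,
        h.lie_t_s_sq]
  exact commute_iff_lie_eq.mpr (left_eq_add.mp hlie)

theorem commute_s_sq_t (h : IsPTriple a r s t) (ha : a ≠ 1) : Commute (s ^ 2) t := by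
  rw [Commute.symm_iff, commute_iff_lie_eq, h.lie_t_s_sq, ← commute_iff_lie_eq]
  exact h.commute_t_sq_s ha

theorem s_pow_mul_r (h : IsPTriple a r s t) (j : ℕ) :
    s ^ j * r = (-1 : k) ^ j • (r * s ^ j) := by
  induction j with
  | zero => simp
  | succ j ih =>
    have hsr : s * r = -(r * s) := eq_neg_of_add_eq_zero_right h.anticomm_rs
    rw [pow_succ, mul_assoc, hsr, mul_neg, ← mul_assoc, ih, smul_mul_assoc, mul_assoc,
      ← pow_succ, pow_succ (-1 : k), mul_neg_one, neg_smul]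

end IsPTriple

end PTriple

section OrderedMonomial

def orderedMonomial {A : Type*} [Monoid A] (r s t : A) (p : ℕ × ℕ × ℕ) : A :=
  r ^ p.1 * s ^ p.2.1 * t ^ p.2.2

theorem orderedMonomial_mul_t {A : Type*} [Monoid A] (r s t : A) (i j K : ℕ) :
    orderedMonomial r s t (i, j, K) * t = orderedMonomial r s t (i, j, K + 1) := by
  simp only [orderedMonomial, pow_succ, mul_assoc]

namespace IsPTriple

variable {k A : Type*} [Field k] [Ring A] [Algebra k A] {a : k} {r s t : A}

theorem orderedMonomial_mul_r_of_even (h : IsPTriple a r s t) (ha : a ≠ 1) (i j l : ℕ) :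
    orderedMonomial r s t (i, j, 2 * l) * r =
      (-1 : k) ^ j • orderedMonomial r s t (i + 1, j, 2 * l) := by
  have hc : Commute (t ^ (2 * l)) r := by
    rw [pow_mul]; exact (h.commute_t_sq_r ha).pow_left l
  simp only [orderedMonomial]
  rw [mul_assoc, hc.eq, ← mul_assoc, mul_assoc (r ^ i), h.s_pow_mul_r, mul_smul_comm,
    smul_mul_assoc, ← mul_assoc, ← pow_succ]

theorem orderedMonomial_mul_r_of_odd (h : IsPTriple a r s t) (ha : a ≠ 1) (i j l : ℕ) :
    orderedMonomial r s t (i, j, 2 * l + 1) * r = orderedMonomial r s t (i, j, 2 * (l + 1))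
      + a • orderedMonomial r s t (i + 2, j, 2 * l)
      - (-1 : k) ^ j • orderedMonomial r s t (i + 1, j, 2 * l + 1) := by
  have htr : t * r = t ^ 2 + a • r ^ 2 - r * t := eq_sub_of_add_eq h.anticomm_tr
  rw [← orderedMonomial_mul_t, mul_assoc, htr]
  simp only [mul_sub, mul_add, mul_smul_comm, sq, ← mul_assoc, orderedMonomial_mul_t,
    h.orderedMonomial_mul_r_of_even ha, smul_mul_assoc, neg_one_pow_smul_neg_one_pow_smul]

theorem orderedMonomial_mul_s_of_even (h : IsPTriple a r s t) (ha : a ≠ 1) (i j l : ℕ) :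
    orderedMonomial r s t (i, j, 2 * l) * s = orderedMonomial r s t (i, j + 1, 2 * l) := by
  have hc : Commute (t ^ (2 * l)) s := by
    rw [pow_mul]; exact (h.commute_t_sq_s ha).pow_left l
  simp only [orderedMonomial]
  rw [mul_assoc, hc.eq, ← mul_assoc, mul_assoc (r ^ i), ← pow_succ]

theorem orderedMonomial_mul_s_of_odd (h : IsPTriple a r s t) (ha : a ≠ 1) (i j l : ℕ) :
    orderedMonomial r s t (i, j, 2 * l + 1) * s = orderedMonomial r s t (i, j, 2 * (l + 1))
      + a • orderedMonomial r s t (i + 2, j, 2 * l)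
      + (2 : k) • orderedMonomial r s t (i, j + 2, 2 * l)
      - orderedMonomial r s t (i, j + 1, 2 * l + 1) := by
  have hts : t * s = t ^ 2 + a • r ^ 2 + (2 : k) • s ^ 2 - s * t := by
    rw [two_smul, ← two_mul]; exact eq_sub_of_add_eq h.anticomm_ts
  rw [← orderedMonomial_mul_t, mul_assoc, hts]
  simp only [mul_sub, mul_add, mul_smul_comm, sq, ← mul_assoc, orderedMonomial_mul_t,
    h.orderedMonomial_mul_r_of_even ha, h.orderedMonomial_mul_s_of_even ha, smul_mul_assoc,
    neg_one_pow_smul_neg_one_pow_smul]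

end IsPTriple

end OrderedMonomial

section NormalFormSpace

open Finsupp

variable {k : Type*} [Field k]

/- `rightMulR a (i, j, K)` and `rightMulS a (i, j, K)` are the right-hand sides of
`orderedMonomial_mul_r_of_even/odd` and `orderedMonomial_mul_s_of_even/odd`, i.e. the products
`r^i s^j t^K * r` and `r^i s^j t^K * s` expanded in ordered monomials. -/
def rightMulR (a : k) : ℕ × ℕ × ℕ → (ℕ × ℕ × ℕ) →₀ k
  | (i, j, K) =>
    if Even K then (-1 : k) ^ j • single (i + 1, j, K) 1
    else single (i, j, K + 1) 1 + a • single (i + 2, j, K - 1) 1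
      - (-1 : k) ^ j • single (i + 1, j, K) 1

def rightMulS (a : k) : ℕ × ℕ × ℕ → (ℕ × ℕ × ℕ) →₀ k
  | (i, j, K) =>
    if Even K then single (i, j + 1, K) 1
    else single (i, j, K + 1) 1 + a • single (i + 2, j, K - 1) 1
      + (2 : k) • single (i, j + 2, K - 1) 1 - single (i, j + 1, K) 1

def nfR (a : k) : Module.End k ((ℕ × ℕ × ℕ) →₀ k) := linearCombination k (rightMulR a)

def nfS (a : k) : Module.End k ((ℕ × ℕ × ℕ) →₀ k) := linearCombination k (rightMulS a)

def nfT (k : Type*) [Field k] : Module.End k ((ℕ × ℕ × ℕ) →₀ k) :=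
  linearCombination k fun p => single (p.1, p.2.1, p.2.2 + 1) 1

variable (a : k) (i j K l : ℕ)

theorem nfT_single : nfT k (single (i, j, K) 1) = single (i, j, K + 1) 1 := by
  simp [nfT]

theorem nfT_single_odd :
    nfT k (single (i, j, 2 * l + 1) 1) = single (i, j, 2 * (l + 1)) 1 := by
  rw [nfT_single, mul_add_one]

theorem nfR_single_even :
    nfR a (single (i, j, 2 * l) 1) = (-1 : k) ^ j • single (i + 1, j, 2 * l) 1 := by
  simp [nfR, rightMulR]

theorem nfR_single_odd : nfR a (single (i, j, 2 * l + 1) 1) = single (i, j, 2 * (l + 1)) 1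
    + a • single (i + 2, j, 2 * l) 1 - (-1 : k) ^ j • single (i + 1, j, 2 * l + 1) 1 := by
  simp [nfR, rightMulR, mul_add_one]

theorem nfS_single_even : nfS a (single (i, j, 2 * l) 1) = single (i, j + 1, 2 * l) 1 := by
  simp [nfS, rightMulS]

theorem nfS_single_odd : nfS a (single (i, j, 2 * l + 1) 1) = single (i, j, 2 * (l + 1)) 1
    + a • single (i + 2, j, 2 * l) 1 + (2 : k) • single (i, j + 2, 2 * l) 1
    - single (i, j + 1, 2 * l + 1) 1 := by
  simp [nfS, rightMulS, mul_add_one]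

theorem lhom_ext_even_odd {M : Type*} [AddCommGroup M] [Module k M]
    {f g : ((ℕ × ℕ × ℕ) →₀ k) →ₗ[k] M}
    (heven : ∀ i j l, f (single (i, j, 2 * l) 1) = g (single (i, j, 2 * l) 1))
    (hodd : ∀ i j l, f (single (i, j, 2 * l + 1) 1) = g (single (i, j, 2 * l + 1) 1)) :
    f = g := by
  refine Finsupp.basisSingleOne.ext fun ⟨i, j, K⟩ => ?_
  rw [coe_basisSingleOne]
  obtain ⟨l, rfl | rfl⟩ := Nat.even_or_odd' K
  exacts [heven i j l, hodd i j l]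

theorem isPTriple_nf : IsPTriple a (nfR a) (nfS a) (nfT k) := by
  constructor <;> (try rw [two_mul]) <;>
    refine lhom_ext_even_odd (fun i j l => ?_) (fun i j l => ?_) <;>
    simp only [LinearMap.add_apply, LinearMap.smul_apply, LinearMap.zero_apply,
      Module.End.mul_apply, sq, map_add, map_sub, map_smul, nfR_single_even, nfR_single_odd,
      nfS_single_even, nfS_single_odd, nfT_single_odd, nfT_single, smul_add, smul_sub,
      neg_one_pow_smul_neg_one_pow_smul, add_assoc, Nat.reduceAdd] <;>
    module

end NormalFormSpace

section Intertwining

open Finsupp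

variable {k A : Type*} [Field k] [Ring A] [Algebra k A] {a : k} {r s t : A}

variable (k) in
def ofNormalForm (r s t : A) : ((ℕ × ℕ × ℕ) →₀ k) →ₗ[k] A :=
  linearCombination k (orderedMonomial r s t)

theorem ofNormalForm_single (p : ℕ × ℕ × ℕ) :
    ofNormalForm k r s t (single p 1) = orderedMonomial r s t p := by
  rw [ofNormalForm, linearCombination_single, one_smul]

theorem ofNormalForm_comp_nfT :
    (ofNormalForm k r s t).comp (nfT k) =
      (LinearMap.mulRight k t).comp (ofNormalForm k r s t) := by
  refine lhom_ext_even_odd (fun i j l => ?_) (fun i j l => ?_) <;>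
  simp only [LinearMap.comp_apply, LinearMap.mulRight_apply, nfT_single, ofNormalForm_single,
    orderedMonomial_mul_t]

theorem IsPTriple.ofNormalForm_comp_nfR (h : IsPTriple a r s t) (ha : a ≠ 1) :
    (ofNormalForm k r s t).comp (nfR a) =
      (LinearMap.mulRight k r).comp (ofNormalForm k r s t) := by
  refine lhom_ext_even_odd (fun i j l => ?_) (fun i j l => ?_) <;>
  simp only [LinearMap.comp_apply, LinearMap.mulRight_apply, nfR_single_even, nfR_single_odd,
    map_add, map_sub, map_smul, ofNormalForm_single, h.orderedMonomial_mul_r_of_even ha,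
    h.orderedMonomial_mul_r_of_odd ha]

theorem IsPTriple.ofNormalForm_comp_nfS (h : IsPTriple a r s t) (ha : a ≠ 1) :
    (ofNormalForm k r s t).comp (nfS a) =
      (LinearMap.mulRight k s).comp (ofNormalForm k r s t) := by
  refine lhom_ext_even_odd (fun i j l => ?_) (fun i j l => ?_) <;>
  simp only [LinearMap.comp_apply, LinearMap.mulRight_apply, nfS_single_even, nfS_single_odd,
    map_add, map_sub, map_smul, ofNormalForm_single, h.orderedMonomial_mul_s_of_even ha,
    h.orderedMonomial_mul_s_of_odd ha]

end Intertwining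

section Quotient

variable {k : Type} [Field k]

theorem adjoin_range_gen (rels : Set (F3 k)) :
    Algebra.adjoin k (Set.range (gen k rels)) = ⊤ := by
  rw [show Set.range (gen k rels) = RingQuot.mkAlgHom k _ '' Set.range (FreeAlgebra.ι k) by
      rw [← Set.range_comp]; rfl,
    ← AlgHom.map_adjoin, FreeAlgebra.adjoin_range_ι, Algebra.map_top, AlgHom.range_eq_top]
  exact RingQuot.mkAlgHom_surjective k _

theorem mem_center_of_forall_commute_gen {rels : Set (F3 k)} {z : quotAlg k rels}
    (h : ∀ i, Commute z (gen k rels i)) : z ∈ Subalgebra.center k (quotAlg k rels) := by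
  refine Subalgebra.mem_center_iff.mpr fun g => ?_
  have hg : g ∈ Algebra.adjoin k (Set.range (gen k rels)) := by
    rw [adjoin_range_gen]; exact Algebra.mem_top
  refine (Algebra.commute_of_mem_adjoin_of_forall_mem_commute hg ?_).eq.symm
  rintro _ ⟨i, rfl⟩
  exact h i

theorem mkAlgHom_eq_zero_of_mem {rels : Set (F3 k)} {x : F3 k} (hx : x ∈ rels) :
    RingQuot.mkAlgHom k (fun a b : F3 k => a ∈ rels ∧ b = 0) x = 0 := by
  rw [RingQuot.mkAlgHom_rel k ⟨hx, rfl⟩, map_zero]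

theorem isPTriple_gen (a : k) :
    IsPTriple a (gen k (Prel k a) 0) (gen k (Prel k a) 1) (gen k (Prel k a) 2) := by
  have hrs := mkAlgHom_eq_zero_of_mem (show X k * Y k + Y k * X k ∈ Prel k a by simp [Prel])
  have htr := mkAlgHom_eq_zero_of_mem
    (show Z k * X k + X k * Z k - Z k ^ 2 - a • X k ^ 2 ∈ Prel k a by simp [Prel])
  have hts := mkAlgHom_eq_zero_of_mem
    (show Z k * (X k - Y k) + (X k - Y k) * Z k + 2 * Y k ^ 2 ∈ Prel k a by simp [Prel])
  simp only [map_add, map_sub, map_mul, map_pow, map_smul, map_ofNat] at hrs htr hts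
  exact isPTriple_iff.mpr ⟨hrs, htr, hts⟩

namespace IsPTriple

variable {A : Type*} [Ring A] [Algebra k A] {a : k} {r s t : A}

def lift (h : IsPTriple a r s t) : quotAlg k (Prel k a) →ₐ[k] A :=
  RingQuot.liftAlgHom k ⟨FreeAlgebra.lift k ![r, s, t], by
    rintro x _ ⟨hx, rfl⟩
    obtain ⟨hrs, htr, hts⟩ := isPTriple_iff.mp h
    simp only [Prel, Set.mem_insert_iff, Set.mem_singleton_iff] at hx
    rcases hx with rfl | rfl | rfl <;> simpa [X, Y, Z, map_ofNat]⟩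

theorem lift_gen (h : IsPTriple a r s t) (i : Fin 3) :
    h.lift (gen k (Prel k a) i) = ![r, s, t] i := by
  rw [lift, gen, RingQuot.liftAlgHom_mkAlgHom_apply, FreeAlgebra.lift_ι_apply]

end IsPTriple

end Quotient

section Basis

open Finsupp

variable {k : Type} [Field k]

def rightAction (a : k) :
    quotAlg k (Prel k a) →ₐ[k] (Module.End k ((ℕ × ℕ × ℕ) →₀ k))ᵐᵒᵖ :=
  (isPTriple_nf a).op.lift

theorem unop_rightAction_gen (a : k) (i : Fin 3) :
    (rightAction a (gen k (Prel k a) i)).unop = ![nfR a, nfS a, nfT k] i := by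
  rw [rightAction, IsPTriple.lift_gen]
  fin_cases i <;> rfl

theorem ofNormalForm_rightAction {a : k} (ha : a ≠ 1) (x : quotAlg k (Prel k a))
    (v : (ℕ × ℕ × ℕ) →₀ k) :
    ofNormalForm k (gen k (Prel k a) 0) (gen k (Prel k a) 1) (gen k (Prel k a) 2)
        ((rightAction a x).unop v) =
      ofNormalForm k (gen k (Prel k a) 0) (gen k (Prel k a) 1) (gen k (Prel k a) 2) v * x := by
  have h := isPTriple_gen a
  have hx : x ∈ Algebra.adjoin k (Set.range (gen k (Prel k a))) := by
    rw [adjoin_range_gen]; trivial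
  induction hx using Algebra.adjoin_induction generalizing v with
  | mem x hx =>
    obtain ⟨i, rfl⟩ := hx
    rw [unop_rightAction_gen]
    fin_cases i
    exacts [LinearMap.congr_fun (h.ofNormalForm_comp_nfR ha) v,
      LinearMap.congr_fun (h.ofNormalForm_comp_nfS ha) v,
      LinearMap.congr_fun ofNormalForm_comp_nfT v]
  | algebraMap c =>
    rw [AlgHom.commutes, MulOpposite.algebraMap_apply, MulOpposite.unop_op,
      Module.algebraMap_end_apply, map_smul, Algebra.smul_def, Algebra.commutes]
  | add x y _ _ hx hy =>
    rw [map_add, MulOpposite.unop_add, LinearMap.add_apply, map_add, hx, hy, mul_add]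
  | mul x y _ _ hx hy =>
    rw [map_mul, MulOpposite.unop_mul, Module.End.mul_apply, hy, hx, mul_assoc]

def vacuumOrbit (a : k) : quotAlg k (Prel k a) →ₗ[k] (ℕ × ℕ × ℕ) →₀ k :=
  LinearMap.applyₗ (single (0, 0, 0) 1) ∘ₗ
    (MulOpposite.opLinearEquiv k).symm.toLinearMap ∘ₗ (rightAction a).toLinearMap

theorem vacuumOrbit_apply (a : k) (x : quotAlg k (Prel k a)) :
    vacuumOrbit a x = (rightAction a x).unop (single (0, 0, 0) 1) :=
  rfl

theorem nfR_pow_single (a : k) (i n : ℕ) :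
    (nfR a ^ n) (single (i, 0, 0) 1) = single (i + n, 0, 0) 1 := by
  induction n with
  | zero => simp
  | succ n ih =>
    rw [pow_succ', Module.End.mul_apply, ih]
    simpa [add_assoc] using nfR_single_even a (i + n) 0 0

theorem nfS_pow_single (a : k) (i j n : ℕ) :
    (nfS a ^ n) (single (i, j, 0) 1) = single (i, j + n, 0) 1 := by
  induction n with
  | zero => simp
  | succ n ih =>
    rw [pow_succ', Module.End.mul_apply, ih]
    simpa [add_assoc] using nfS_single_even a i (j + n) 0

theorem nfT_pow_single (i j K n : ℕ) :
    (nfT k ^ n) (single (i, j, K) 1) = single (i, j, K + n) 1 := by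
  induction n with
  | zero => simp
  | succ n ih => rw [pow_succ', Module.End.mul_apply, ih, nfT_single, add_assoc]

theorem vacuumOrbit_orderedMonomial (a : k) (p : ℕ × ℕ × ℕ) :
    vacuumOrbit a
      (orderedMonomial (gen k (Prel k a) 0) (gen k (Prel k a) 1) (gen k (Prel k a) 2) p) =
      single p 1 := by
  obtain ⟨i, j, K⟩ := p
  simp only [vacuumOrbit_apply, orderedMonomial, map_mul, map_pow, MulOpposite.unop_mul,
    MulOpposite.unop_pow, unop_rightAction_gen, Module.End.mul_apply, Matrix.cons_val_zero,
    Matrix.cons_val_one, Matrix.cons_val_two, Matrix.head_cons, Matrix.tail_cons]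
  rw [nfR_pow_single, nfS_pow_single, nfT_pow_single, zero_add, zero_add, zero_add]

def normalFormEquiv {a : k} (ha : a ≠ 1) :
    ((ℕ × ℕ × ℕ) →₀ k) ≃ₗ[k] quotAlg k (Prel k a) :=
  LinearEquiv.ofLinearMap
    (ofNormalForm k (gen k (Prel k a) 0) (gen k (Prel k a) 1) (gen k (Prel k a) 2))
    (vacuumOrbit a)
    (LinearMap.ext fun x => by
      rw [LinearMap.comp_apply, vacuumOrbit_apply, ofNormalForm_rightAction ha,
        ofNormalForm_single]
      simp [orderedMonomial])
    (Finsupp.basisSingleOne.ext fun p => by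
      rw [coe_basisSingleOne, LinearMap.comp_apply, ofNormalForm_single,
        vacuumOrbit_orderedMonomial, LinearMap.id_apply])

def normalFormBasis {a : k} (ha : a ≠ 1) :
    Module.Basis (ℕ × ℕ × ℕ) k (quotAlg k (Prel k a)) :=
  Finsupp.basisSingleOne.map (normalFormEquiv ha)

theorem normalFormBasis_apply {a : k} (ha : a ≠ 1) (p : ℕ × ℕ × ℕ) :
    normalFormBasis ha p =
      orderedMonomial (gen k (Prel k a) 0) (gen k (Prel k a) 1) (gen k (Prel k a) 2) p := by
  rw [normalFormBasis, Module.Basis.map_apply, coe_basisSingleOne]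
  exact ofNormalForm_single p

end Basis

theorem stmt17_general (k : Type) [Field k] (a : k) (ha : a ≠ 1) :
    (gen k (Prel k a) 0 ^ 2 ∈ Subalgebra.center k (quotAlg k (Prel k a))) ∧
    (gen k (Prel k a) 1 ^ 2 ∈ Subalgebra.center k (quotAlg k (Prel k a))) ∧
    (gen k (Prel k a) 2 ^ 2 ∈ Subalgebra.center k (quotAlg k (Prel k a))) ∧
    ∃ b : Module.Basis (ℕ × ℕ × ℕ) k (quotAlg k (Prel k a)),
      ∀ p : ℕ × ℕ × ℕ,
        b p = gen k (Prel k a) 0 ^ p.1 * gen k (Prel k a) 1 ^ p.2.1 *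
          gen k (Prel k a) 2 ^ p.2.2 := by
  have h := isPTriple_gen a
  refine ⟨mem_center_of_forall_commute_gen fun i => ?_,
    mem_center_of_forall_commute_gen fun i => ?_, mem_center_of_forall_commute_gen fun i => ?_,
    normalFormBasis ha, normalFormBasis_apply ha⟩ <;> fin_cases i
  exacts [(Commute.refl _).pow_left 2, h.commute_r_sq_s, h.commute_r_sq_t ha,
    h.commute_s_sq_r, (Commute.refl _).pow_left 2, h.commute_s_sq_t ha,
    h.commute_t_sq_r ha, h.commute_t_sq_s ha, (Commute.refl _).pow_left 2]

theorem stmt17 (k : Type) [Field k] [IsAlgClosed k] (hchar : ringChar k ≠ 2)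
    (a : k) (ha : a ≠ 1) :
    (gen k (Prel k a) 0 ^ 2 ∈ Subalgebra.center k (quotAlg k (Prel k a))) ∧
    (gen k (Prel k a) 1 ^ 2 ∈ Subalgebra.center k (quotAlg k (Prel k a))) ∧
    (gen k (Prel k a) 2 ^ 2 ∈ Subalgebra.center k (quotAlg k (Prel k a))) ∧
    ∃ b : Module.Basis (ℕ × ℕ × ℕ) k (quotAlg k (Prel k a)),
      ∀ p : ℕ × ℕ × ℕ,
        b p = gen k (Prel k a) 0 ^ p.1 * gen k (Prel k a) 1 ^ p.2.1 *
          gen k (Prel k a) 2 ^ p.2.2 :=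
  stmt17_general k a ha
end
end
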